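/- arXiv:2512.20762 — 2 statements merged into one kernel-verified Lean document; each statement's English description precedes it below -/
import Mathlib

section
/- Let Z and Z' be real random variables with densities f and g respectively, and suppose there exists c ≥ 0 such that f(z) ≥ g(z) whenever |z| < c and f(z) ≤ g(z) whenever |z| ≥ c. Let H(z) = -σ(z)·log σ(z) - σ(-z)·log σ(-z) where σ(z) = 1/(1+e^{-z}). Then E[H(Z)] ≥ E[H(Z')]. -/
/-!
Write `H z = binEntropy (σ z)`. Since `σ (-z) = 1 - σ z` and `binEntropy` decreases on
`[1/2, 1]`, `H` depends only on `|z|` and decreases in it. Hence `(H z - H c) (f z - g z) ≥ 0`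
for every `z` under the single-crossing hypothesis, and integrating this (using `∫ f = ∫ g`)
gives `∫ H f - ∫ H g ≥ 0`.
-/

open MeasureTheory

noncomputable def logistic (z : ℝ) : ℝ := 1 / (1 + Real.exp (-z))

noncomputable def entropyOfLogit (z : ℝ) : ℝ :=
  -(logistic z * Real.log (logistic z)) - logistic (-z) * Real.log (logistic (-z))

open Real

lemma logistic_eq_sigmoid : logistic = sigmoid := by
  funext z
  rw [logistic, sigmoid_def, one_div]

lemma entropyOfLogit_eq_binEntropy_sigmoid (z : ℝ) :
    entropyOfLogit z = binEntropy (sigmoid z) := by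
  rw [entropyOfLogit, logistic_eq_sigmoid, binEntropy, sigmoid_neg, log_inv, log_inv]
  ring

lemma entropyOfLogit_neg (z : ℝ) : entropyOfLogit (-z) = entropyOfLogit z := by
  rw [entropyOfLogit_eq_binEntropy_sigmoid, entropyOfLogit_eq_binEntropy_sigmoid, sigmoid_neg,
    binEntropy_one_sub]

lemma entropyOfLogit_abs (z : ℝ) : entropyOfLogit |z| = entropyOfLogit z := by
  rcases abs_choice z with h | h <;> rw [h]
  exact entropyOfLogit_neg z

lemma entropyOfLogit_le_of_abs_le {a b : ℝ} (hab : |a| ≤ |b|) :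
    entropyOfLogit b ≤ entropyOfLogit a := by
  rw [← entropyOfLogit_abs a, ← entropyOfLogit_abs b, entropyOfLogit_eq_binEntropy_sigmoid,
    entropyOfLogit_eq_binEntropy_sigmoid]
  have ha : 2⁻¹ ≤ sigmoid |a| := sigmoid_zero ▸ sigmoid_le (abs_nonneg a)
  have hab' : sigmoid |a| ≤ sigmoid |b| := sigmoid_le hab
  exact binEntropy_strictAntiOn.antitoneOn ⟨ha, sigmoid_le_one _⟩
    ⟨ha.trans hab', sigmoid_le_one _⟩ hab'

lemma norm_entropyOfLogit_le (z : ℝ) : ‖entropyOfLogit z‖ ≤ log 2 := by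
  rw [entropyOfLogit_eq_binEntropy_sigmoid, norm_of_nonneg
    (binEntropy_nonneg (sigmoid_nonneg z) (sigmoid_le_one z))]
  exact binEntropy_le_log_two

lemma continuous_entropyOfLogit : Continuous entropyOfLogit := by
  have h : entropyOfLogit = binEntropy ∘ sigmoid := funext entropyOfLogit_eq_binEntropy_sigmoid
  exact h ▸ binEntropy_continuous.comp continuous_sigmoid

lemma integral_mul_le_integral_mul_of_sign_agree {α : Type*} [MeasurableSpace α]
    {μ : Measure α} {f g h : α → ℝ} {C t : ℝ} (hf : Integrable f μ) (hg : Integrable g μ)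
    (hfg : ∫ x, f x ∂μ = ∫ x, g x ∂μ) (hh : AEStronglyMeasurable h μ)
    (hh_bdd : ∀ᵐ x ∂μ, ‖h x‖ ≤ C) (hsign : ∀ᵐ x ∂μ, 0 ≤ (h x - t) * (f x - g x)) :
    ∫ x, h x * g x ∂μ ≤ ∫ x, h x * f x ∂μ := by
  have hhf : Integrable (fun x => h x * f x) μ := hf.bdd_mul hh hh_bdd
  have hhg : Integrable (fun x => h x * g x) μ := hg.bdd_mul hh hh_bdd
  have hdiff : ∫ x, (h x - t) * (f x - g x) ∂μ =
      ∫ x, h x * f x ∂μ - ∫ x, h x * g x ∂μ := by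
    have hsplit : (fun x => (h x - t) * (f x - g x)) =
        fun x => (h x * f x - h x * g x) - t * (f x - g x) := by
      funext x; ring
    have hdiff_int : Integrable (fun x => h x * f x - h x * g x) μ := hhf.sub hhg
    have hmass_int : Integrable (fun x => t * (f x - g x)) μ := (hf.sub hg).const_mul t
    rw [hsplit, integral_sub hdiff_int hmass_int, integral_sub hhf hhg,
      integral_const_mul, integral_sub hf hg, hfg, sub_self, mul_zero, sub_zero]
  linarith [integral_nonneg_of_ae hsign]

theorem expected_entropyOfLogit_ge_general
    (f g : ℝ → ℝ)
    (hf_prob : ∫ z, f z = 1) (hg_prob : ∫ z, g z = 1)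
    (hf_int : Integrable f) (hg_int : Integrable g)
    (c : ℝ) (hc : 0 ≤ c)
    (h_lt : ∀ z : ℝ, |z| < c → g z ≤ f z)
    (h_ge : ∀ z : ℝ, c ≤ |z| → f z ≤ g z) :
    ∫ z, entropyOfLogit z * g z ≤ ∫ z, entropyOfLogit z * f z := by
  refine integral_mul_le_integral_mul_of_sign_agree (t := entropyOfLogit c) hf_int hg_int
    (hf_prob.trans hg_prob.symm) continuous_entropyOfLogit.aestronglyMeasurable
    (ae_of_all _ norm_entropyOfLogit_le) (ae_of_all _ fun z => ?_)
  rcases lt_or_ge |z| c with hz | hz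
  · have hH : entropyOfLogit c ≤ entropyOfLogit z :=
      entropyOfLogit_le_of_abs_le (by rw [abs_of_nonneg hc]; exact hz.le)
    exact mul_nonneg (sub_nonneg.2 hH) (sub_nonneg.2 (h_lt z hz))
  · have hH : entropyOfLogit z ≤ entropyOfLogit c :=
      entropyOfLogit_le_of_abs_le (by rwa [abs_of_nonneg hc])
    exact mul_nonneg_of_nonpos_of_nonpos (sub_nonpos.2 hH) (sub_nonpos.2 (h_ge z hz))

theorem expected_entropyOfLogit_ge
    (f g : ℝ → ℝ) (hf_meas : Measurable f) (hg_meas : Measurable g)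
    (hf_nonneg : ∀ z, 0 ≤ f z) (hg_nonneg : ∀ z, 0 ≤ g z)
    (hf_prob : ∫ z, f z = 1) (hg_prob : ∫ z, g z = 1)
    (hf_int : Integrable f) (hg_int : Integrable g)
    (c : ℝ) (hc : 0 ≤ c)
    (h_lt : ∀ z : ℝ, |z| < c → g z ≤ f z)
    (h_ge : ∀ z : ℝ, c ≤ |z| → f z ≤ g z) :
    ∫ z, entropyOfLogit z * g z ≤ ∫ z, entropyOfLogit z * f z :=
  expected_entropyOfLogit_ge_general f g hf_prob hg_prob hf_int hg_int c hc h_lt h_ge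
end

section
/- For the Cox partial likelihood rank probabilities r_k (probability that a test point x* with linear predictor β̂ᵀx* fails in rank position k among sorted uncensored core-group times t₁ < … < tₙ with linear predictors β̂ᵀxᵢ), the consecutive ratio satisfies r_{k+1}/r_k = ((1-δ_k)·e^{βᵀx*} + S_k) / (e^{βᵀx*} - e^{βᵀx_k} + S_k), where S_k = Σ_{i=k}^{n} e^{βᵀxᵢ} and δ_k is the failure indicator of unit k. In the uncensored case (all δᵢ = 1) this reads r_{k+1}/r_k = S_k / (e^{βᵀx*} - e^{βᵀx_k} + S_k). -/
open Finset

/-- the linear predictors with the test point's predictor `vstar` inserted at rank `k`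
(1-indexed) -/
noncomputable def insLin (v : ℕ → ℝ) (vstar : ℝ) (k i : ℕ) : ℝ :=
  if i < k then v i else if i = k then vstar else v (i - 1)

/-- the failure indicators with the test point's indicator (`true`) inserted at rank `k` -/
def insCens (δ : ℕ → Bool) (k i : ℕ) : Bool :=
  if i < k then δ i else if i = k then true else δ (i - 1)

/-- the Cox partial-likelihood probability that the test point fails in rank position `k`
among `n` sorted core-group event times (1-indexed) -/
noncomputable def rankProb (n : ℕ) (v : ℕ → ℝ) (δ : ℕ → Bool) (vstar : ℝ) (k : ℕ) : ℝ :=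
  ∏ i ∈ Finset.Icc 1 (n + 1),
    if insCens δ k i then
      Real.exp (insLin v vstar k i) / ∑ j ∈ Finset.Icc i (n + 1), Real.exp (insLin v vstar k j)
    else 1

/-! Moving the test point from rank `k` to rank `k + 1` permutes the sequence by the transposition
of `k` and `k + 1`. Every risk set `{j ≥ i}` with `i ≠ k + 1` contains both or neither of `k` and
`k + 1`, so its sum is invariant under that transposition. Hence all factors of the partial
likelihood except the `k`-th and `(k+1)`-th agree, and the ratio reduces to four explicit factors.
-/

lemma sum_Icc_eq_add_sum_Icc_succ {M : Type*} [AddCommMonoid M] (f : ℕ → M) {k m : ℕ}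
    (hk : k ≤ m) :
    ∑ j ∈ Icc k m, f j = f k + ∑ j ∈ Icc (k + 1) m, f j := by
  rw [← insert_Icc_add_one_left_eq_Icc hk, sum_insert (by simp)]

lemma sum_Icc_comp_swap {M : Type*} [AddCommMonoid M] (f : ℕ → M) {i k m : ℕ}
    (hi : i ≠ k + 1) (hm : k + 1 ≤ m) :
    ∑ j ∈ Icc i m, f (Equiv.swap k (k + 1) j) = ∑ j ∈ Icc i m, f j :=
  sum_equiv (Equiv.swap k (k + 1))
    (fun j => by simp only [mem_Icc, Equiv.swap_apply_def]; split_ifs <;> omega)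
    (fun _ _ => rfl)

lemma prod_mul_mul_comm_of_eqOn_sdiff_pair {ι M : Type*} [DecidableEq ι] [CommMonoid M]
    {s : Finset ι} {a b : ι} {f g : ι → M} (hab : a ≠ b) (ha : a ∈ s) (hb : b ∈ s)
    (hfg : ∀ i ∈ s, i ≠ a → i ≠ b → f i = g i) :
    (∏ i ∈ s, f i) * (g a * g b) = (∏ i ∈ s, g i) * (f a * f b) := by
  have hsub : {a, b} ⊆ s := insert_subset ha (singleton_subset_iff.mpr hb)
  have hrest : ∏ i ∈ s \ {a, b}, f i = ∏ i ∈ s \ {a, b}, g i :=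
    prod_congr rfl fun i hi => by
      simp only [mem_sdiff, mem_insert, mem_singleton, not_or] at hi
      exact hfg i hi.1 hi.2.1 hi.2.2
  rw [← prod_sdiff hsub, ← prod_sdiff (f := g) hsub, prod_pair hab, prod_pair hab, hrest]
  ac_rfl

noncomputable def coxFactor (m : ℕ) (w : ℕ → ℝ) (d : ℕ → Bool) (i : ℕ) : ℝ :=
  if d i then Real.exp (w i) / ∑ j ∈ Icc i m, Real.exp (w j) else 1

lemma coxFactor_pos {m i : ℕ} (w : ℕ → ℝ) (d : ℕ → Bool) (hi : i ≤ m) :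
    0 < coxFactor m w d i := by
  unfold coxFactor
  split
  · exact div_pos (Real.exp_pos _)
      (sum_pos (fun j _ => Real.exp_pos _) (nonempty_Icc.mpr hi))
  · exact one_pos

lemma coxFactor_comp_swap {m i k : ℕ} (w : ℕ → ℝ) (d : ℕ → Bool)
    (hik : i ≠ k) (hik' : i ≠ k + 1) (hm : k + 1 ≤ m) :
    coxFactor m (w ∘ Equiv.swap k (k + 1)) (d ∘ Equiv.swap k (k + 1)) i = coxFactor m w d i := by
  simp only [coxFactor, Function.comp_apply, Equiv.swap_apply_of_ne_of_ne hik hik',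
    sum_Icc_comp_swap (fun j => Real.exp (w j)) hik' hm]

lemma prod_coxFactor_comp_swap_div {m k : ℕ} (w : ℕ → ℝ) (d : ℕ → Bool) (hk : 1 ≤ k)
    (hm : k + 1 ≤ m) :
    (∏ i ∈ Icc 1 m, coxFactor m (w ∘ Equiv.swap k (k + 1)) (d ∘ Equiv.swap k (k + 1)) i) /
        ∏ i ∈ Icc 1 m, coxFactor m w d i =
      (coxFactor m (w ∘ Equiv.swap k (k + 1)) (d ∘ Equiv.swap k (k + 1)) k *
          coxFactor m (w ∘ Equiv.swap k (k + 1)) (d ∘ Equiv.swap k (k + 1)) (k + 1)) /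
        (coxFactor m w d k * coxFactor m w d (k + 1)) := by
  have hprod := prod_mul_mul_comm_of_eqOn_sdiff_pair (s := Icc 1 m) (by omega : k ≠ k + 1)
    (mem_Icc.mpr ⟨hk, by omega⟩) (mem_Icc.mpr ⟨by omega, hm⟩)
    (fun i _ hik hik' => coxFactor_comp_swap w d hik hik' hm)
  have hpos : 0 < ∏ i ∈ Icc 1 m, coxFactor m w d i :=
    prod_pos fun i hi => coxFactor_pos w d (mem_Icc.mp hi).2
  rw [div_eq_div_iff hpos.ne' (mul_pos (coxFactor_pos w d (by omega))
    (coxFactor_pos w d hm)).ne', hprod, mul_comm]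

lemma rankProb_eq_prod_coxFactor (n : ℕ) (v : ℕ → ℝ) (δ : ℕ → Bool) (vstar : ℝ) (k : ℕ) :
    rankProb n v δ vstar k =
      ∏ i ∈ Icc 1 (n + 1), coxFactor (n + 1) (insLin v vstar k) (insCens δ k) i :=
  rfl

lemma insLin_succ (v : ℕ → ℝ) (vstar : ℝ) (k : ℕ) :
    insLin v vstar (k + 1) = insLin v vstar k ∘ Equiv.swap k (k + 1) := by
  funext i
  simp only [insLin, Function.comp_apply, Equiv.swap_apply_def]
  split_ifs <;> first | rfl | omega | congr 1

lemma insCens_succ (δ : ℕ → Bool) (k : ℕ) :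
    insCens δ (k + 1) = insCens δ k ∘ Equiv.swap k (k + 1) := by
  funext i
  simp only [insCens, Function.comp_apply, Equiv.swap_apply_def]
  split_ifs <;> first | rfl | omega | congr 1

lemma rankProb_succ_div_rankProb {n k : ℕ} (v : ℕ → ℝ) (δ : ℕ → Bool) (vstar : ℝ)
    (hk1 : 1 ≤ k) (hkn : k ≤ n) :
    rankProb n v δ vstar (k + 1) / rankProb n v δ vstar k =
      (coxFactor (n + 1) (insLin v vstar (k + 1)) (insCens δ (k + 1)) k *
          coxFactor (n + 1) (insLin v vstar (k + 1)) (insCens δ (k + 1)) (k + 1)) /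
        (coxFactor (n + 1) (insLin v vstar k) (insCens δ k) k *
          coxFactor (n + 1) (insLin v vstar k) (insCens δ k) (k + 1)) := by
  simp only [rankProb_eq_prod_coxFactor, insLin_succ, insCens_succ]
  exact prod_coxFactor_comp_swap_div _ _ hk1 (by omega)

lemma sum_Icc_succ_insLin {M : Type*} [AddCommMonoid M] (f : ℝ → M) (v : ℕ → ℝ) (vstar : ℝ)
    (k m : ℕ) :
    ∑ j ∈ Icc (k + 1) (m + 1), f (insLin v vstar k j) = ∑ j ∈ Icc k m, f (v j) := by
  rw [← map_add_right_Icc k m 1, sum_map]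
  refine sum_congr rfl fun j hj => ?_
  have hkj := (mem_Icc.mp hj).1
  simp only [addRightEmbedding_apply, insLin, Nat.add_sub_cancel]
  rw [if_neg (by omega), if_neg (by omega)]

lemma sum_Icc_insLin_self {M : Type*} [AddCommMonoid M] (f : ℝ → M) (v : ℕ → ℝ) (vstar : ℝ)
    {k m : ℕ} (hk : k ≤ m + 1) :
    ∑ j ∈ Icc k (m + 1), f (insLin v vstar k j) = f vstar + ∑ j ∈ Icc k m, f (v j) := by
  rw [sum_Icc_eq_add_sum_Icc_succ _ hk, sum_Icc_succ_insLin]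
  simp [insLin]

lemma coxFactor_insLin_self (v : ℕ → ℝ) (δ : ℕ → Bool) (vstar : ℝ) {n k : ℕ}
    (hk : k ≤ n + 1) :
    coxFactor (n + 1) (insLin v vstar k) (insCens δ k) k =
      Real.exp vstar / (Real.exp vstar + ∑ j ∈ Icc k n, Real.exp (v j)) := by
  rw [coxFactor, sum_Icc_insLin_self Real.exp v vstar hk]
  simp [insCens, insLin]

lemma coxFactor_insLin_succ (v : ℕ → ℝ) (δ : ℕ → Bool) (vstar : ℝ) (n k : ℕ) :
    coxFactor (n + 1) (insLin v vstar k) (insCens δ k) (k + 1) =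
      if δ k then Real.exp (v k) / ∑ j ∈ Icc k n, Real.exp (v j) else 1 := by
  rw [coxFactor, sum_Icc_succ_insLin]
  simp [insCens, insLin]

lemma coxFactor_succ_insLin (v : ℕ → ℝ) (δ : ℕ → Bool) (vstar : ℝ) {n k : ℕ} (hk : k ≤ n) :
    coxFactor (n + 1) (insLin v vstar (k + 1)) (insCens δ (k + 1)) k =
      if δ k then Real.exp (v k) / (Real.exp vstar + ∑ j ∈ Icc k n, Real.exp (v j)) else 1 := by
  have hsum : ∑ j ∈ Icc k (n + 1), Real.exp (insLin v vstar (k + 1) j) =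
      Real.exp vstar + ∑ j ∈ Icc k n, Real.exp (v j) := by
    rw [sum_Icc_eq_add_sum_Icc_succ _ (by omega), sum_Icc_insLin_self _ _ _ (by omega),
      sum_Icc_eq_add_sum_Icc_succ _ hk]
    simp only [insLin, lt_add_one, if_true]
    ring
  rw [coxFactor, hsum]
  simp [insCens, insLin]

theorem rankProb_succ_ratio (n : ℕ) (v : ℕ → ℝ) (δ : ℕ → Bool) (vstar : ℝ)
    (k : ℕ) (hk1 : 1 ≤ k) (hkn : k ≤ n) :
    (rankProb n v δ vstar (k + 1) / rankProb n v δ vstar k =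
      ((if δ k then 0 else 1) * Real.exp vstar + ∑ i ∈ Finset.Icc k n, Real.exp (v i)) /
        (Real.exp vstar - Real.exp (v k) + ∑ i ∈ Finset.Icc k n, Real.exp (v i))) ∧
    ((∀ i, δ i = true) →
      rankProb n v δ vstar (k + 1) / rankProb n v δ vstar k =
        (∑ i ∈ Finset.Icc k n, Real.exp (v i)) /
          (Real.exp vstar - Real.exp (v k) + ∑ i ∈ Finset.Icc k n, Real.exp (v i))) := by
  have hsplit := sum_Icc_eq_add_sum_Icc_succ (fun j => Real.exp (v j)) hkn
  have hratio : rankProb n v δ vstar (k + 1) / rankProb n v δ vstar k =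
      ((if δ k then 0 else 1) * Real.exp vstar + ∑ i ∈ Finset.Icc k n, Real.exp (v i)) /
        (Real.exp vstar - Real.exp (v k) + ∑ i ∈ Finset.Icc k n, Real.exp (v i)) := by
    rw [rankProb_succ_div_rankProb v δ vstar hk1 hkn, coxFactor_succ_insLin v δ vstar hkn,
      coxFactor_insLin_self v δ vstar (by omega), coxFactor_insLin_self v δ vstar (by omega),
      coxFactor_insLin_succ, hsplit]
    have he := Real.exp_pos vstar
    have ha := Real.exp_pos (v k)
    have hT : 0 ≤ ∑ j ∈ Icc (k + 1) n, Real.exp (v j) := sum_nonneg fun j _ => (Real.exp_pos _).le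
    generalize Real.exp vstar = e at *
    generalize Real.exp (v k) = a at *
    generalize ∑ j ∈ Icc (k + 1) n, Real.exp (v j) = T at *
    rw [show e - a + (a + T) = e + T by ring]
    have : e + T ≠ 0 := by positivity
    have : a + T ≠ 0 := by positivity
    have : e + (a + T) ≠ 0 := by positivity
    cases δ k
    · simp only [Bool.false_eq_true, if_false]
      field_simp
    · simp only [if_true]
      field_simp
      ring
  exact ⟨hratio, fun hδ => by simpa [hδ k] using hratio⟩
end
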